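/- For a diagonalizable matrix A = VΛV⁻¹, the generalized two-sided field of values G(A) equals the convex hull of the spectrum of A, i.e., G(A) = Co({λ_1, …, λ_n}). -/
import Mathlib


open Matrix

/-- The generalized two-sided field of values of `A`, relative to the
eigenvector matrix `V`. -/
def G {n : ℕ} (V A : Matrix (Fin n) (Fin n) ℂ) : Set ℂ :=
  {c | ∃ x y : Fin n → ℂ, y = (V * Vᴴ)⁻¹ *ᵥ x ∧ star y ⬝ᵥ x = 1 ∧
    c = star y ⬝ᵥ (A *ᵥ x)}

lemma key_dot {n : ℕ} (V : Matrix (Fin n) (Fin n) ℂ) (hV : IsUnit V.det)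
    (u z : Fin n → ℂ) :
    star ((V * Vᴴ)⁻¹ *ᵥ (V *ᵥ u)) ⬝ᵥ z = star u ⬝ᵥ (V⁻¹ *ᵥ z) := by
  have h1 : (V * Vᴴ)⁻¹ *ᵥ (V *ᵥ u) = Vᴴ⁻¹ *ᵥ u := by
    rw [mulVec_mulVec, Matrix.mul_inv_rev, Matrix.mul_assoc, Matrix.nonsing_inv_mul V hV, Matrix.mul_one]
  rw [h1, star_mulVec, ← dotProduct_mulVec, conjTranspose_nonsing_inv,
    conjTranspose_conjTranspose]

theorem stmt7 {n : ℕ} (V A : Matrix (Fin n) (Fin n) ℂ) (d : Fin n → ℂ)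
    (hV : IsUnit V.det) (hA : A = V * Matrix.diagonal d * V⁻¹) :
    G V A = convexHull ℝ (Set.range d) := by
  have hVV : V⁻¹ * V = 1 := Matrix.nonsing_inv_mul V hV
  have hVV' : V * V⁻¹ = 1 := Matrix.mul_nonsing_inv V hV
  have hkey : V⁻¹ * (V * Matrix.diagonal d * V⁻¹) * V = Matrix.diagonal d := by
    rw [Matrix.mul_assoc V⁻¹, Matrix.mul_assoc (V * Matrix.diagonal d), hVV,
      Matrix.mul_one, ← Matrix.mul_assoc, hVV, Matrix.one_mul]
  have hAx : ∀ u : Fin n → ℂ,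
      V⁻¹ *ᵥ (A *ᵥ (V *ᵥ u)) = Matrix.diagonal d *ᵥ u := by
    intro u
    rw [hA, mulVec_mulVec, mulVec_mulVec, hkey]
  have hVu : ∀ u : Fin n → ℂ, V⁻¹ *ᵥ (V *ᵥ u) = u := by
    intro u
    rw [mulVec_mulVec, hVV, one_mulVec]
  ext c
  constructor
  · rintro ⟨x, y, rfl, h1, rfl⟩
    set u : Fin n → ℂ := V⁻¹ *ᵥ x with hu
    have hx : x = V *ᵥ u := by
      rw [hu, mulVec_mulVec, hVV', one_mulVec]
    rw [hx] at h1 ⊢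
    rw [key_dot V hV, hVu] at h1
    rw [key_dot V hV, hAx]
    have h1' : ∑ i, (starRingEnd ℂ) (u i) * u i = 1 := by
      simpa [dotProduct] using h1
    set w : Fin n → ℝ := fun i => Complex.normSq (u i) with hw
    have hcu : ∀ i, (starRingEnd ℂ) (u i) * u i = (w i : ℂ) := by
      intro i
      rw [hw, mul_comm, Complex.mul_conj]
    have hw1 : ∑ i, w i = 1 := by
      have : ((∑ i, w i : ℝ) : ℂ) = 1 := by
        push_cast
        rw [← h1']
        exact Finset.sum_congr rfl fun i _ => (hcu i).symm
      exact_mod_cast this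
    refine mem_convexHull_of_exists_fintype w d (fun i => Complex.normSq_nonneg _)
      hw1 (fun i => Set.mem_range_self i) ?_
    simp only [dotProduct, mulVec_diagonal, Pi.star_apply, Complex.star_def]
    refine Finset.sum_congr rfl fun i _ => ?_
    rw [Complex.real_smul, ← hcu i]
    ring
  · intro hc
    rw [convexHull_range_eq_exists_affineCombination] at hc
    obtain ⟨s, w, hw0, hw1, rfl⟩ := hc
    set W : Fin n → ℝ := fun i => if i ∈ s then w i else 0 with hW
    have hW0 : ∀ i, 0 ≤ W i := fun i => by
      rw [hW]; dsimp only; split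
      · exact hw0 i ‹_›
      · exact le_refl 0
    have hWsum : ∑ i, W i = 1 := by
      rw [hW, ← hw1]
      simp [Finset.sum_ite_mem]
    set u : Fin n → ℂ := fun i => (Real.sqrt (W i) : ℂ) with hu
    have hcu : ∀ i, (starRingEnd ℂ) (u i) * u i = (W i : ℂ) := by
      intro i
      rw [hu]
      dsimp only
      rw [Complex.conj_ofReal, ← Complex.ofReal_mul, Real.mul_self_sqrt (hW0 i)]
    refine ⟨V *ᵥ u, (V * Vᴴ)⁻¹ *ᵥ (V *ᵥ u), rfl, ?_, ?_⟩
    · rw [key_dot V hV, hVu]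
      have h2 : star u ⬝ᵥ u = ((∑ i, W i : ℝ) : ℂ) := by
        push_cast
        simp only [dotProduct, Pi.star_apply, Complex.star_def]
        exact Finset.sum_congr rfl fun i _ => hcu i
      rw [h2, hWsum, Complex.ofReal_one]
    · rw [key_dot V hV, hAx, Finset.affineCombination_eq_linear_combination s d w hw1]
      have hsum : ∑ i ∈ s, w i • d i = ∑ i, W i • d i := by
        rw [hW]
        simp [ite_smul, Finset.sum_ite_mem]
      rw [hsum]
      simp only [dotProduct, mulVec_diagonal, Pi.star_apply, Complex.star_def]
      refine Finset.sum_congr rfl fun i _ => ?_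
      rw [Complex.real_smul, ← hcu i]
      ring
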